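/- (Theorem 1) Let Φ be a finite set of subsets of E = {e_1,…,e_n}, with K nonnegative cost scenarios c_1,…,c_K ∈ ℝ^n and F(X, c_j) = Σ_{e_i ∈ X} c_{ji}. Define aggregated element costs ĉ_i = wowa_{(v,p)}(c_{1i},…,c_{Ki}) and let X̂ minimize Σ_{e_i∈X} ĉ_i over Φ. Then for every X ∈ Φ, WOWA(X̂) ≤ K·v_1·WOWA(X), where WOWA(X) = wowa_{(v,p)}(F(X,c_1),…,F(X,c_K)). -/

import Mathlib

/-!
The weight `wowaWeight K v p σ j` is the marginal value of the capacity `A ↦ w*(p(A))` along the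
chain of prefixes of `σ`. As `v` is nonincreasing, `w*` is concave on `[0, ∞)`, so the capacity is
submodular, and by the greedy argument (Abel summation against the sorted values) a sorting
permutation maximizes `wowaW` among all permutations. Hence WOWA is subadditive:
`WOWA(X̂) ≤ ∑_{i ∈ X̂} ĉ_i ≤ ∑_{i ∈ X} ĉ_i`. Since `w*` has slope at most `K v₁`, every weight is at
most `K v₁` times the corresponding probability, so `ĉ_i ≤ K v₁ 𝔼_p[c_i]`; finally `w*(t) ≥ t` on
`[0, 1]` gives `𝔼_p[F(X, ·)] ≤ WOWA(X)`.
-/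

open Finset

/-- The piecewise linear function `w*` induced by the weight vector `v`:
`w*(0)=0`, `w*(j/K) = ∑_{i≤j} v i`, linear on each `[(j-1)/K, j/K]`. -/
noncomputable def wstar (K : ℕ) (v : Fin K → ℝ) (t : ℝ) : ℝ :=
  ∑ i : Fin K, v i * min 1 (max 0 (t * (K : ℝ) - (i.1 : ℝ)))

/-- The WOWA weight `ω_j = w*(∑_{i≤j} p_{σ(i)}) - w*(∑_{i<j} p_{σ(i)})`. -/
noncomputable def wowaWeight (K : ℕ) (v p : Fin K → ℝ) (σ : Equiv.Perm (Fin K))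
    (j : Fin K) : ℝ :=
  wstar K v (∑ i ∈ Finset.Iic j, p (σ i)) - wstar K v (∑ i ∈ Finset.Iio j, p (σ i))

/-- The WOWA aggregation of `a` relative to a permutation `σ`
(sorting `a` nonincreasingly gives the WOWA value). -/
noncomputable def wowaW (K : ℕ) (v p : Fin K → ℝ) (σ : Equiv.Perm (Fin K))
    (a : Fin K → ℝ) : ℝ :=
  ∑ j : Fin K, wowaWeight K v p σ j * a (σ j)

theorem Fin.sum_mul_nonneg_of_antitone {n : ℕ} {b d : Fin n → ℝ} (hb : Antitone b)
    (hb0 : 0 ≤ b) (hd : ∀ k, 0 ≤ ∑ i ∈ Iic k, d i) : 0 ≤ ∑ i, b i * d i := by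
  induction n with
  | zero => simp
  | succ n ih =>
    have hsplit : ∑ i, b i * d i = ∑ i : Fin n, (b i.castSucc - b (last n)) * d i.castSucc
        + b (last n) * ∑ i, d i := by
      simp only [Fin.sum_univ_castSucc, sub_mul, mul_add, sum_sub_distrib, mul_sum]
      ring
    rw [hsplit]
    refine add_nonneg (ih (fun i j hij => sub_le_sub_right (hb (castSucc_le_castSucc_iff.2 hij)) _)
      (fun i => sub_nonneg.2 (hb (le_last _))) fun k => ?_) (mul_nonneg (hb0 _) ?_)
    · rw [← sum_image (castSucc_injective _).injOn, finsetImage_castSucc_Iic]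
      exact hd _
    · simpa [← Fin.top_eq_last] using hd (last n)

theorem Fin.sum_Iic_sub_Iio {n : ℕ} {M : Type*} [AddCommGroup M] (F : Finset (Fin n) → M)
    (k : Fin n) : ∑ j ∈ Iic k, (F (Iic j) - F (Iio j)) = F (Iic k) - F ∅ := by
  obtain ⟨m, hm⟩ := k
  induction m with
  | zero =>
    have hIic : Iic (⟨0, hm⟩ : Fin n) = {⟨0, hm⟩} := by ext; simp [Fin.ext_iff, Fin.le_def]
    have hIio : Iio (⟨0, hm⟩ : Fin n) = ∅ := by ext; simp [Fin.lt_def]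
    simp [hIic, hIio]
  | succ m ih =>
    have hIic : Iic (⟨m + 1, hm⟩ : Fin n) = insert ⟨m + 1, hm⟩ (Iic ⟨m, by omega⟩) := by
      ext; simp [Fin.ext_iff, Fin.le_def]; omega
    have hIio : Iio (⟨m + 1, hm⟩ : Fin n) = Iic ⟨m, by omega⟩ := by
      ext; simp [Fin.le_def, Fin.lt_def]
    rw [hIic, sum_insert (by simp [Fin.le_def]), ← hIic, ih, hIio]
    abel

theorem sum_range_min_one_max_zero (m : ℕ) (s : ℝ) :
    ∑ i ∈ range m, min 1 (max 0 (s - i)) = min (m : ℝ) (max 0 s) := by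
  induction m with
  | zero => simp
  | succ m ih =>
    rw [sum_range_succ, ih]
    push_cast
    have hm : (0 : ℝ) ≤ m := m.cast_nonneg
    simp only [min_def, max_def]
    split_ifs <;> linarith

theorem sum_Iic_min_one_max_zero {K : ℕ} (k : Fin K) (s : ℝ) :
    ∑ i ∈ Iic k, min 1 (max 0 (s - i)) = min ((k : ℝ) + 1) (max 0 s) := by
  calc ∑ i ∈ Iic k, min 1 (max 0 (s - (i : ℕ)))
      = ∑ i ∈ (Iic k).map Fin.valEmbedding, min 1 (max 0 (s - i)) :=
        (sum_map (Iic k) Fin.valEmbedding fun i : ℕ => min 1 (max 0 (s - i))).symm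
    _ = min ((k : ℝ) + 1) (max 0 s) := by
      rw [Fin.map_valEmbedding_Iic, ← Nat.range_succ_eq_Iic, sum_range_min_one_max_zero]
      push_cast
      rfl

theorem concaveOn_min_max_zero_mul (c a : ℝ) (ha : 0 ≤ a) :
    ConcaveOn ℝ (Set.Ici 0) fun t => min c (max 0 (t * a)) := by
  refine ⟨convex_Ici 0, fun x hx y hy α β hα hβ hαβ => ?_⟩
  simp only [smul_eq_mul, Set.mem_Ici] at *
  rw [max_eq_right (by positivity), max_eq_right (by positivity), max_eq_right (by positivity)]
  have hc : α * c + β * c = c := by rw [← add_mul, hαβ, one_mul]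
  refine le_min ?_ ?_
  · nlinarith [mul_le_mul_of_nonneg_left (min_le_left c (x * a)) hα,
      mul_le_mul_of_nonneg_left (min_le_left c (y * a)) hβ]
  · nlinarith [mul_le_mul_of_nonneg_left (min_le_right c (x * a)) hα,
      mul_le_mul_of_nonneg_left (min_le_right c (y * a)) hβ]

theorem ConcaveOn.map_add_sub_map_le {s : Set ℝ} {f : ℝ → ℝ} (hf : ConcaveOn ℝ s f)
    {x y e : ℝ} (hy : y ∈ s) (hxe : x + e ∈ s) (hyx : y ≤ x) (he : 0 ≤ e) :
    f (x + e) - f x ≤ f (y + e) - f y := by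
  rcases he.eq_or_lt with rfl | he
  · simp
  have hL : 0 < x + e - y := by linarith
  set t := e / (x + e - y) with ht
  have ht0 : 0 ≤ t := by positivity
  have ht1 : 0 ≤ 1 - t := by rw [ht, one_sub_div hL.ne']; exact div_nonneg (by linarith) hL.le
  -- `x` and `y + e` are the two mirror-image convex combinations of `y` and `x + e`
  have hx : t • y + (1 - t) • (x + e) = x := by
    rw [ht, smul_eq_mul, smul_eq_mul]; field_simp; ring
  have hye : (1 - t) • y + t • (x + e) = y + e := by
    rw [ht, smul_eq_mul, smul_eq_mul]; field_simp; ring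
  have h1 := hf.2 hy hxe ht0 ht1 (by ring)
  have h2 := hf.2 hy hxe ht1 ht0 (by ring)
  rw [hx] at h1
  rw [hye] at h2
  simp only [smul_eq_mul] at h1 h2
  linarith

section Wstar

variable {K : ℕ} {v : Fin K → ℝ}

theorem concaveOn_wstar (hv : Antitone v) (hv0 : 0 ≤ v) :
    ConcaveOn ℝ (Set.Ici 0) (wstar K v) := by
  refine ⟨convex_Ici 0, fun x hx y hy α β hα hβ hαβ => ?_⟩
  simp only [smul_eq_mul]
  set h : ℝ → Fin K → ℝ := fun t i => min 1 (max 0 (t * K - i))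
  -- each partial sum `∑ i ≤ k, h t i = min (k + 1) (max 0 (t * K))` is concave in `t`
  have key : 0 ≤ ∑ i, v i * (h (α * x + β * y) i - α * h x i - β * h y i) := by
    refine Fin.sum_mul_nonneg_of_antitone hv hv0 fun k => ?_
    have hk := (concaveOn_min_max_zero_mul ((k : ℝ) + 1) K K.cast_nonneg).2 hx hy hα hβ hαβ
    simp only [smul_eq_mul] at hk
    simp only [h, sum_sub_distrib, ← mul_sum, sum_Iic_min_one_max_zero]
    linarith
  simp only [mul_sub, sum_sub_distrib, mul_left_comm _ α, mul_left_comm _ β, ← mul_sum] at key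
  simp only [wstar]
  linarith

theorem wstar_zero : wstar K v 0 = 0 := by
  simp [wstar]

theorem wstar_one : wstar K v 1 = ∑ i, v i := by
  refine sum_congr rfl fun i _ => ?_
  have : (1 : ℝ) ≤ 1 * K - i := by
    rw [one_mul, le_sub_iff_add_le']
    exact_mod_cast i.isLt
  rw [max_eq_right (by linarith), min_eq_left this, mul_one]

theorem le_wstar (hv : Antitone v) (hv0 : 0 ≤ v) (hvs : ∑ i, v i = 1) {t : ℝ}
    (ht0 : 0 ≤ t) (ht1 : t ≤ 1) : t ≤ wstar K v t := by
  have h := (concaveOn_wstar hv hv0).2 Set.self_mem_Ici (zero_le_one' ℝ)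
    (sub_nonneg.2 ht1) ht0 (sub_add_cancel 1 t)
  simpa [wstar_zero, wstar_one, hvs] using h

theorem wstar_le (hK : 0 < K) (hv : Antitone v) (hv0 : 0 ≤ v) {e : ℝ} (he : 0 ≤ e) :
    wstar K v e ≤ K * v ⟨0, hK⟩ * e := by
  calc wstar K v e ≤ ∑ i : Fin K, v ⟨0, hK⟩ * min 1 (max 0 (e * K - i)) :=
        sum_le_sum fun i _ => mul_le_mul_of_nonneg_right (hv (Nat.zero_le i))
          (le_min zero_le_one (le_max_left _ _))
    _ = v ⟨0, hK⟩ * min (K : ℝ) (max 0 (e * K)) := by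
        rw [← mul_sum, Fin.sum_univ_eq_sum_range (fun i => min 1 (max 0 (e * K - i))),
          sum_range_min_one_max_zero]
    _ ≤ v ⟨0, hK⟩ * (e * K) :=
        mul_le_mul_of_nonneg_left ((min_le_right _ _).trans_eq (max_eq_right (by positivity)))
          (hv0 _)
    _ = K * v ⟨0, hK⟩ * e := by ring

theorem wstar_add_sub_le (hK : 0 < K) (hv : Antitone v) (hv0 : 0 ≤ v) {x e : ℝ} (hx : 0 ≤ x)
    (he : 0 ≤ e) : wstar K v (x + e) - wstar K v x ≤ K * v ⟨0, hK⟩ * e := by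
  have h := (concaveOn_wstar hv hv0).map_add_sub_map_le Set.self_mem_Ici
    (Set.mem_Ici.2 (add_nonneg hx he)) hx he
  rw [zero_add, wstar_zero, sub_zero] at h
  exact h.trans (wstar_le hK hv hv0 he)

end Wstar

theorem sum_sub_le_of_concaveOn {ι : Type*} [LinearOrder ι] [LocallyFiniteOrderBot ι]
    {f : ℝ → ℝ} (hf : ConcaveOn ℝ (Set.Ici 0) f) (hf0 : 0 ≤ f 0) {q : ι → ℝ} (hq : 0 ≤ q)
    (S : Finset ι) :
    ∑ j ∈ S, (f (∑ i ∈ Iic j, q i) - f (∑ i ∈ Iio j, q i)) ≤ f (∑ j ∈ S, q j) := by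
  induction S using Finset.induction_on_max with
  | empty => simpa using hf0
  | insert j S hS ih =>
    have hj : j ∉ S := fun h => lt_irrefl j (hS j h)
    have hSq : ∑ i ∈ S, q i ≤ ∑ i ∈ Iio j, q i :=
      sum_le_sum_of_subset_of_nonneg (fun i hi => mem_Iio.2 (hS i hi)) fun i _ _ => hq i
    -- submodularity of `A ↦ f (∑ i ∈ A, q i)`, from `S ⊆ Iio j`
    have hmarg := hf.map_add_sub_map_le (sum_nonneg fun i _ => hq i)
      (Set.mem_Ici.2 (add_nonneg (sum_nonneg fun i _ => hq i) (hq j))) hSq (hq j)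
    rw [sum_insert hj, sum_insert hj, ← add_sum_Iio_eq_sum_Iic, add_comm (q j), add_comm (q j)]
    linarith

section Wowa

variable {K : ℕ} {v p : Fin K → ℝ}

theorem sum_Iic_wowaWeight (σ : Equiv.Perm (Fin K)) (k : Fin K) :
    ∑ j ∈ Iic k, wowaWeight K v p σ j = wstar K v (∑ j ∈ Iic k, p (σ j)) := by
  have h := Fin.sum_Iic_sub_Iio (fun S => wstar K v (∑ i ∈ S, p (σ i))) k
  rwa [sum_empty, wstar_zero, sub_zero] at h

theorem wowaWeight_le (hK : 0 < K) (hv : Antitone v) (hv0 : 0 ≤ v) (hp : 0 ≤ p)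
    (σ : Equiv.Perm (Fin K)) (j : Fin K) : wowaWeight K v p σ j ≤ K * v ⟨0, hK⟩ * p (σ j) := by
  rw [wowaWeight, ← add_sum_Iio_eq_sum_Iic, add_comm]
  exact wstar_add_sub_le hK hv hv0 (sum_nonneg fun i _ => hp _) (hp _)

theorem wowaW_sum {ι : Type*} (σ : Equiv.Perm (Fin K)) (s : Finset ι) (a : Fin K → ι → ℝ) :
    wowaW K v p σ (fun j => ∑ i ∈ s, a j i) = ∑ i ∈ s, wowaW K v p σ (fun j => a j i) := by
  simp only [wowaW, mul_sum]
  exact sum_comm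

theorem wowaW_le (hK : 0 < K) (hv : Antitone v) (hv0 : 0 ≤ v) (hp : 0 ≤ p) {a : Fin K → ℝ}
    (ha : 0 ≤ a) (σ : Equiv.Perm (Fin K)) :
    wowaW K v p σ a ≤ K * v ⟨0, hK⟩ * ∑ j, p j * a j := by
  rw [← Equiv.sum_comp σ, mul_sum]
  exact sum_le_sum fun j _ =>
    (mul_le_mul_of_nonneg_right (wowaWeight_le hK hv hv0 hp σ j) (ha _)).trans_eq (by ring)

theorem sum_mul_le_wowaW (hv : Antitone v) (hv0 : 0 ≤ v) (hvs : ∑ i, v i = 1) (hp : 0 ≤ p)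
    (hps : ∑ j, p j = 1) {a : Fin K → ℝ} (ha : 0 ≤ a) {σ : Equiv.Perm (Fin K)}
    (hσ : Antitone (a ∘ σ)) : ∑ j, p j * a j ≤ wowaW K v p σ a := by
  have key : 0 ≤ ∑ j, a (σ j) * (wowaWeight K v p σ j - p (σ j)) := by
    refine Fin.sum_mul_nonneg_of_antitone hσ (fun j => ha (σ j)) fun k => ?_
    have hP1 : ∑ j ∈ Iic k, p (σ j) ≤ 1 := by
      rw [← hps, ← Equiv.sum_comp σ]
      exact sum_le_sum_of_subset_of_nonneg (subset_univ _) fun j _ _ => hp _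
    rw [sum_sub_distrib, sum_Iic_wowaWeight, sub_nonneg]
    exact le_wstar hv hv0 hvs (sum_nonneg fun j _ => hp _) hP1
  rw [← Equiv.sum_comp σ, wowaW, ← sub_nonneg, ← sum_sub_distrib]
  exact key.trans_eq (sum_congr rfl fun j _ => by ring)

theorem wowaW_le_wowaW_of_antitone (hv : Antitone v) (hv0 : 0 ≤ v) (hp : 0 ≤ p)
    {a : Fin K → ℝ} (ha : 0 ≤ a) {σ : Equiv.Perm (Fin K)} (hσ : Antitone (a ∘ σ))
    (τ : Equiv.Perm (Fin K)) : wowaW K v p τ a ≤ wowaW K v p σ a := by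
  set ρ : Fin K ≃ Fin K := σ.trans τ.symm
  have hτ : wowaW K v p τ a = ∑ j, wowaWeight K v p τ (ρ j) * a (σ j) := by
    rw [wowaW, ← Equiv.sum_comp ρ]
    simp [ρ]
  have key : 0 ≤ ∑ j, a (σ j) * (wowaWeight K v p σ j - wowaWeight K v p τ (ρ j)) := by
    refine Fin.sum_mul_nonneg_of_antitone hσ (fun j => ha (σ j)) fun k => ?_
    have hchain := sum_sub_le_of_concaveOn (concaveOn_wstar hv hv0) wstar_zero.ge
      (fun i => hp (τ i)) ((Iic k).map ρ.toEmbedding)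
    simp only [sum_map] at hchain
    rw [sum_sub_distrib, sum_Iic_wowaWeight, sub_nonneg]
    simpa [ρ, wowaWeight] using hchain
  rw [hτ, wowaW, ← sub_nonneg, ← sum_sub_distrib]
  exact key.trans_eq (sum_congr rfl fun j _ => by ring)

end Wowa

theorem wowa_approx_general (K n : ℕ) (hK : 0 < K) (v p : Fin K → ℝ)
    (hv0 : ∀ j, 0 ≤ v j) (hvs : ∑ j, v j = 1)
    (hvmono : ∀ i j : Fin K, i ≤ j → v j ≤ v i)
    (hp0 : ∀ j, 0 < p j) (hps : ∑ j, p j = 1)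
    (c : Fin K → Fin n → ℝ) (hc : ∀ j i, 0 ≤ c j i)
    (Φ : Finset (Finset (Fin n)))
    -- sorting permutations for the cost vector of each element
    (σc : Fin n → Equiv.Perm (Fin K))
    (hσc : ∀ i, ∀ j j' : Fin K, j ≤ j' → c (σc i j') i ≤ c (σc i j) i)
    -- sorting permutations for the cost vector of each solution
    (σS : Finset (Fin n) → Equiv.Perm (Fin K))
    (hσS : ∀ X : Finset (Fin n), ∀ j j' : Fin K, j ≤ j' →
      (∑ i ∈ X, c (σS X j') i) ≤ ∑ i ∈ X, c (σS X j) i)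
    (Xhat : Finset (Fin n))
    (hXhat : ∀ X ∈ Φ, (∑ i ∈ Xhat, wowaW K v p (σc i) (fun j => c j i)) ≤
      ∑ i ∈ X, wowaW K v p (σc i) (fun j => c j i)) :
    ∀ X ∈ Φ,
      wowaW K v p (σS Xhat) (fun j => ∑ i ∈ Xhat, c j i) ≤
        (K : ℝ) * v ⟨0, hK⟩ * wowaW K v p (σS X) (fun j => ∑ i ∈ X, c j i) := by
  intro X hX
  have hv : Antitone v := fun i j h => hvmono i j h
  have hp : 0 ≤ p := fun j => (hp0 j).le
  calc wowaW K v p (σS Xhat) (fun j => ∑ i ∈ Xhat, c j i)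
      = ∑ i ∈ Xhat, wowaW K v p (σS Xhat) (fun j => c j i) := wowaW_sum _ _ _
    _ ≤ ∑ i ∈ Xhat, wowaW K v p (σc i) (fun j => c j i) := sum_le_sum fun i _ =>
        wowaW_le_wowaW_of_antitone hv hv0 hp (hc · i) (fun j j' h => hσc i j j' h) _
    _ ≤ ∑ i ∈ X, wowaW K v p (σc i) (fun j => c j i) := hXhat X hX
    _ ≤ ∑ i ∈ X, K * v ⟨0, hK⟩ * ∑ j, p j * c j i :=
        sum_le_sum fun i _ => wowaW_le hK hv hv0 hp (hc · i) _
    _ = K * v ⟨0, hK⟩ * ∑ j, p j * ∑ i ∈ X, c j i := by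
        simp only [mul_sum]
        exact sum_comm
    _ ≤ K * v ⟨0, hK⟩ * wowaW K v p (σS X) (fun j => ∑ i ∈ X, c j i) :=
        mul_le_mul_of_nonneg_left (sum_mul_le_wowaW hv hv0 hvs hp hps
          (fun j => sum_nonneg fun i _ => hc j i) fun j j' h => hσS X j j' h)
          (mul_nonneg K.cast_nonneg (hv0 _))

/-- Theorem 1: if X̂ minimizes the aggregated costs ĉ, then
WOWA(X̂) ≤ K·v₁·WOWA(X) for every feasible X. -/
theorem wowa_approx (K n : ℕ) (hK : 0 < K) (v p : Fin K → ℝ)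
    (hv0 : ∀ j, 0 ≤ v j) (hvs : ∑ j, v j = 1)
    (hvmono : ∀ i j : Fin K, i ≤ j → v j ≤ v i)
    (hp0 : ∀ j, 0 < p j) (hps : ∑ j, p j = 1)
    (c : Fin K → Fin n → ℝ) (hc : ∀ j i, 0 ≤ c j i)
    (Φ : Finset (Finset (Fin n)))
    -- sorting permutations for the cost vector of each element
    (σc : Fin n → Equiv.Perm (Fin K))
    (hσc : ∀ i, ∀ j j' : Fin K, j ≤ j' → c (σc i j') i ≤ c (σc i j) i)
    -- sorting permutations for the cost vector of each solution
    (σS : Finset (Fin n) → Equiv.Perm (Fin K))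
    (hσS : ∀ X : Finset (Fin n), ∀ j j' : Fin K, j ≤ j' →
      (∑ i ∈ X, c (σS X j') i) ≤ ∑ i ∈ X, c (σS X j) i)
    (Xhat : Finset (Fin n)) (hXhatΦ : Xhat ∈ Φ)
    (hXhat : ∀ X ∈ Φ, (∑ i ∈ Xhat, wowaW K v p (σc i) (fun j => c j i)) ≤
      ∑ i ∈ X, wowaW K v p (σc i) (fun j => c j i)) :
    ∀ X ∈ Φ,
      wowaW K v p (σS Xhat) (fun j => ∑ i ∈ Xhat, c j i) ≤
        (K : ℝ) * v ⟨0, hK⟩ * wowaW K v p (σS X) (fun j => ∑ i ∈ X, c j i) :=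
  wowa_approx_general K n hK v p hv0 hvs hvmono hp0 hps c hc Φ σc hσc σS hσS Xhat hXhat
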